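/- Let (X, B, μ, T) be a measure-preserving system. Suppose that for every f ∈ L^∞ with ∫ f dμ = 0 there is a full-measure set A_f such that for every x ∈ A_f the sequence (f(Tⁿx)) is a weakly mixing sequence. Then T is weakly mixing. -/

import Mathlib

open Filter Finset MeasureTheory Topology
open scoped Classical

/-- The Cesàro averages of `‖x n‖` are bounded (limsup finite). -/
def CesaroBounded (x : ℕ → ℂ) : Prop :=
  ∃ C : ℝ, ∀ N : ℕ, (1 / (N : ℝ)) * ∑ n ∈ Finset.Icc 1 N, ‖x n‖ ≤ C

/-- A bounded sequence. -/
def SeqBdd (y : ℕ → ℂ) : Prop := ∃ C : ℝ, ∀ n : ℕ, ‖y n‖ ≤ C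

/-- `ℓ h` is the limit of the shifted correlations of `x` against `y` along `Nq`. -/
def CorrLim (x y : ℕ → ℂ) (Nq : ℕ → ℕ) (ℓ : ℕ → ℂ) : Prop :=
  ∀ h : ℕ, 1 ≤ h →
    Tendsto (fun q : ℕ => (1 / (Nq q : ℂ)) * ∑ n ∈ Finset.Icc 1 (Nq q),
      x (n + h) * (starRingEnd ℂ) (y n)) atTop (nhds (ℓ h))

/-- A weakly mixing sequence of complex numbers. -/
def WeaklyMixingSeq (x : ℕ → ℂ) : Prop :=
  CesaroBounded x ∧
  ∀ y : ℕ → ℂ, SeqBdd y → ∀ Nq : ℕ → ℕ, StrictMono Nq → ∀ ℓ : ℕ → ℂ,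
    CorrLim x y Nq ℓ →
    Tendsto (fun H : ℕ => (1 / (H : ℝ)) * ∑ h ∈ Finset.Icc 1 H, ‖ℓ h‖) atTop (nhds 0)

/-- A strongly mixing sequence of complex numbers. -/
def StronglyMixingSeq (x : ℕ → ℂ) : Prop :=
  CesaroBounded x ∧
  ∀ y : ℕ → ℂ, SeqBdd y → ∀ Nq : ℕ → ℕ, StrictMono Nq → ∀ ℓ : ℕ → ℂ,
    CorrLim x y Nq ℓ →
    Tendsto (fun h : ℕ => ‖ℓ h‖) atTop (nhds 0)

/-- A compact sequence of complex numbers. -/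
def CompactSeq (c : ℕ → ℂ) : Prop :=
  SeqBdd c ∧
  ∀ ε : ℝ, 0 < ε → ∃ K : ℕ, 1 ≤ K ∧ ∀ m : ℕ, 1 ≤ m →
    ∃ k : ℕ, 1 ≤ k ∧ k ≤ K ∧
      Filter.limsup (fun N : ℕ => (1 / (N : ℝ)) *
        ∑ n ∈ Finset.Icc 1 N, ‖c (n + m) - c (n + k)‖ ^ 2) atTop < ε

/-- A weakly mixing measure preserving system. -/
def WeaklyMixingSys {X : Type*} [MeasurableSpace X] (μ : MeasureTheory.Measure X)
    (T : X → X) : Prop :=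
  ∀ A B : Set X, MeasurableSet A → MeasurableSet B →
    Tendsto (fun N : ℕ => (1 / (N : ℝ)) * ∑ n ∈ Finset.Icc 1 N,
      |(μ (A ∩ T^[n] ⁻¹' B)).toReal - (μ A).toReal * (μ B).toReal|) atTop (nhds 0)

/-- A strongly mixing measure preserving system. -/
def StronglyMixingSys {X : Type*} [MeasurableSpace X] (μ : MeasureTheory.Measure X)
    (T : X → X) : Prop :=
  ∀ A B : Set X, MeasurableSet A → MeasurableSet B →
    Tendsto (fun n : ℕ => (μ (A ∩ T^[n] ⁻¹' B)).toReal) atTop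
      (nhds ((μ A).toReal * (μ B).toReal))

/-!
Put `f = 1_B - μ(B)` and `g = 1_A`, and let `c_h = (f ∘ T^h) · conj g`. By the mean ergodic
theorem in `L²`, the ergodic averages of each `c_h` converge in `L²`; a Borel–Cantelli argument
along a diagonal subsequence `N_q` makes them converge almost everywhere for all `h` at once,
to `P_h` say. For almost every `x`, `h ↦ P_h(x)` is then the correlation limit of
`(f (Tⁿ x))` against `(g (Tⁿ x))` along `N_q`, so weak mixing of that sequence makes the Cesàro
means of `|P_h(x)|` tend to `0`. Integrating, by dominated convergence, and using
`∫ P_h = ∫ c_h = μ(A ∩ T⁻ʰ B) - μ(A) μ(B)`, yields weak mixing of `T`.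
-/

open scoped ENNReal

section

variable {X E : Type*} [MeasurableSpace X] {μ : Measure X}

theorem exists_strictMono_forall_ae_tendsto_of_tendstoInMeasure [PseudoEMetricSpace E]
    {f : ℕ → ℕ → X → E} {g : ℕ → X → E} (hfg : ∀ i, TendstoInMeasure μ (f i) atTop (g i)) :
    ∃ φ : ℕ → ℕ, StrictMono φ ∧
      ∀ i, ∀ᵐ x ∂μ, Tendsto (fun n => f i (φ n) x) atTop (𝓝 (g i x)) := by
  have hpos (n : ℕ) : (0 : ℝ≥0∞) < 2⁻¹ ^ n := ENNReal.pow_pos (by simp) n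
  have hsmall : ∀ n, ∀ᶠ N in atTop, ∀ i ∈ Set.Iic n,
      μ {x | 2⁻¹ ^ n ≤ edist (f i N x) (g i x)} ≤ 2⁻¹ ^ n := fun n =>
    (Set.finite_Iic n).eventually_all.2 fun i _ =>
      (hfg i _ (hpos n)).eventually (ge_mem_nhds (hpos n))
  obtain ⟨φ, hφ, hφsmall⟩ := extraction_forall_of_eventually hsmall
  refine ⟨φ, hφ, fun i => ?_⟩
  -- Borel–Cantelli, applied from index `i` on, where the measure bounds hold
  have hsum : ∑' n, μ {x | 2⁻¹ ^ (n + i) ≤ edist (f i (φ (n + i)) x) (g i x)} ≠ ∞ := by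
    refine ne_top_of_le_ne_top ?_ (ENNReal.tsum_le_tsum fun n =>
      (hφsmall (n + i) i (by simp)).trans (pow_le_pow_of_le_one (by simp) (by simp) le_self_add))
    simp [ENNReal.tsum_geometric, ENNReal.one_sub_inv_two]
  filter_upwards [ae_eventually_notMem hsum] with x hx
  rw [← tendsto_add_atTop_iff_nat i, tendsto_iff_edist_tendsto_0]
  refine tendsto_of_tendsto_of_tendsto_of_le_of_le' tendsto_const_nhds
    ((ENNReal.tendsto_pow_atTop_nhds_zero_iff.2 ENNReal.one_half_lt_one).comp
      (tendsto_add_atTop_nat i))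
    (Eventually.of_forall fun _ => bot_le) ?_
  filter_upwards [hx] with n hn
  exact (not_le.1 hn).le

theorem MeasureTheory.Lp.coeFn_birkhoffAverage_compMeasurePreserving {𝕜 : Type*}
    [NormedField 𝕜]
    [NormedAddCommGroup E] [NormedSpace 𝕜 E] {p : ℝ≥0∞} {T : X → X}
    (hT : MeasurePreserving T μ μ) (g : Lp E p μ) (N : ℕ) :
    ⇑(birkhoffAverage 𝕜 (Lp.compMeasurePreserving T hT) id N g) =ᵐ[μ]
      birkhoffAverage 𝕜 T g N := by
  have hiter : ∀ᵐ x ∂μ, ∀ k,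
      ((Lp.compMeasurePreserving T hT)^[k] g : X → E) x = g (T^[k] x) := by
    refine ae_all_iff.2 fun k => ?_
    rw [Lp.compMeasurePreserving_iterate]
    exact Lp.coeFn_compMeasurePreserving g (hT.iterate k)
  filter_upwards [Lp.coeFn_smul (N : 𝕜)⁻¹ (birkhoffSum (Lp.compMeasurePreserving T hT) id N g),
    Lp.coeFn_finsetSum (range N) fun k => (Lp.compMeasurePreserving T hT)^[k] g, hiter]
    with x hsmul hsum hiter
  simp only [birkhoffAverage, birkhoffSum, id] at hsmul hsum ⊢
  rw [hsmul, Pi.smul_apply, hsum, Finset.sum_apply]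
  simp only [hiter]

theorem exists_strictMono_ae_tendsto_birkhoffAverage {𝕜 : Type*} [RCLike 𝕜]
    [NormedAddCommGroup E] [InnerProductSpace 𝕜 E] [CompleteSpace E] {T : X → X}
    (hT : MeasurePreserving T μ μ) {G : ℕ → X → E} (hG : ∀ i, MemLp (G i) 2 μ) :
    ∃ φ : ℕ → ℕ, StrictMono φ ∧ ∃ P : ℕ → X → E, (∀ i, AEStronglyMeasurable (P i) μ) ∧
      ∀ i, ∀ᵐ x ∂μ, Tendsto (fun n => birkhoffAverage 𝕜 T (G i) (φ n) x) atTop (𝓝 (P i x)) := by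
  let U := (Lp.compMeasurePreservingₗᵢ (E := E) (p := 2) 𝕜 T hT).toContinuousLinearMap
  obtain ⟨φ, hφ, hae⟩ := exists_strictMono_forall_ae_tendsto_of_tendstoInMeasure fun i =>
    tendstoInMeasure_of_tendsto_Lp (U.tendsto_birkhoffAverage_orthogonalProjection
      (LinearIsometry.norm_toContinuousLinearMap_le _) ((hG i).toLp (G i)))
  refine ⟨φ, hφ, fun i => ((U.eqLocus (1 : Lp E 2 μ →L[𝕜] Lp E 2 μ)).orthogonalProjectionOnto
      ((hG i).toLp (G i)) : Lp E 2 μ), fun i => Lp.aestronglyMeasurable _, fun i => ?_⟩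
  filter_upwards [hae i,
    ae_all_iff.2 fun n => Lp.coeFn_birkhoffAverage_compMeasurePreserving (𝕜 := 𝕜) hT
      ((hG i).toLp (G i)) (φ n),
    ae_all_iff.2 fun n => hT.quasiMeasurePreserving.birkhoffAverage_ae_eq_of_ae_eq 𝕜
      (hG i).coeFn_toLp (φ n)] with x hx hLp hpt
  refine hx.congr fun n => ?_
  rw [← hpt n, ← hLp n]
  rfl

theorem MeasureTheory.MeasurePreserving.integral_comp_of_aestronglyMeasurable [NormedAddCommGroup E]
    [NormedSpace ℝ E] {Y : Type*} [MeasurableSpace Y] {ν : Measure Y} {f : X → Y}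
    (hf : MeasurePreserving f μ ν) {g : Y → E} (hg : AEStronglyMeasurable g ν) :
    ∫ x, g (f x) ∂μ = ∫ y, g y ∂ν := by
  rw [← hf.map_eq] at hg ⊢
  exact (integral_map hf.measurable.aemeasurable hg).symm

theorem tendsto_cesaro_norm_integral_of_ae [IsFiniteMeasure μ] [NormedAddCommGroup E]
    [NormedSpace ℝ E] {P : ℕ → X → E} {C : ℝ} (hP : ∀ h, AEStronglyMeasurable (P h) μ)
    (hPC : ∀ h, ∀ᵐ x ∂μ, ‖P h x‖ ≤ C)
    (hlim : ∀ᵐ x ∂μ, Tendsto (fun H : ℕ => (1 / (H : ℝ)) * ∑ h ∈ Icc 1 H, ‖P h x‖) atTop (𝓝 0)) :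
    Tendsto (fun H : ℕ => (1 / (H : ℝ)) * ∑ h ∈ Icc 1 H, ‖∫ x, P h x ∂μ‖) atTop (𝓝 0) := by
  have hint (h : ℕ) : Integrable (fun x => ‖P h x‖) μ := (Integrable.of_bound (hP h) C (hPC h)).norm
  have hbound (H : ℕ) : ∀ᵐ x ∂μ, ‖(1 / (H : ℝ)) * ∑ h ∈ Icc 1 H, ‖P h x‖‖ ≤ C := by
    filter_upwards [ae_all_iff.2 hPC] with x hx
    rw [Real.norm_of_nonneg (by positivity)]
    calc (1 / (H : ℝ)) * ∑ h ∈ Icc 1 H, ‖P h x‖ ≤ 1 / (H : ℝ) * (H * C) := by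
          gcongr
          simpa using sum_le_card_nsmul (Icc 1 H) _ C fun h _ => hx h
      _ ≤ C := by
          rcases eq_or_ne H 0 with rfl | hH
          · simpa using (norm_nonneg _).trans (hx 0)
          · field_simp; rfl
  have hJ : Tendsto (fun H : ℕ => ∫ x, (1 / (H : ℝ)) * ∑ h ∈ Icc 1 H, ‖P h x‖ ∂μ) atTop (𝓝 0) := by
    simpa using tendsto_integral_of_dominated_convergence (fun _ => C)
      (fun H => ((Finset.aestronglyMeasurable_fun_sum _ fun h _ => (hP h).norm).const_mul _))
      (integrable_const C) hbound hlim
  refine squeeze_zero (fun H => by positivity) (fun H => ?_) hJ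
  rw [integral_const_mul, integral_finsetSum _ fun h _ => hint h]
  gcongr with h
  exact norm_integral_le_integral_norm _

end

section

variable {X E 𝕜 : Type*} [RCLike 𝕜]

theorem sum_Icc_one_iterate_eq_birkhoffSum [AddCommMonoid E] (T : X → X) (g : X → E)
    (N : ℕ) (x : X) :
    ∑ n ∈ Icc 1 N, g (T^[n] x) = birkhoffSum T (g ∘ T) N x := by
  induction N with
  | zero => simp
  | succ N ih =>
    rw [sum_Icc_succ_top (by omega), ih, birkhoffSum_succ, Function.comp_apply,
      Function.iterate_succ_apply']

theorem norm_birkhoffAverage_le [NormedAddCommGroup E] [NormedSpace 𝕜 E] (T : X → X)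
    {g : X → E} {C : ℝ} (hg : ∀ x, ‖g x‖ ≤ C) (n : ℕ) (x : X) :
    ‖birkhoffAverage 𝕜 T g n x‖ ≤ C := by
  rcases Nat.eq_zero_or_pos n with rfl | hn
  · simpa using (norm_nonneg _).trans (hg x)
  calc ‖birkhoffAverage 𝕜 T g n x‖ ≤ (n : ℝ)⁻¹ * ∑ k ∈ range n, ‖g (T^[k] x)‖ := by
        rw [birkhoffAverage, birkhoffSum, norm_smul, norm_inv, RCLike.norm_natCast]
        gcongr
        exact norm_sum_le _ _
    _ ≤ (n : ℝ)⁻¹ * ∑ _k ∈ range n, C := by gcongr; exact hg _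
    _ = C := by simp [field]

end

section

variable {X 𝕜 : Type*} [MeasurableSpace X] {μ : Measure X} [RCLike 𝕜]

theorem integral_birkhoffAverage {T : X → X} (hT : MeasurePreserving T μ μ)
    {g : X → 𝕜} (hg : Integrable g μ) {n : ℕ} (hn : n ≠ 0) :
    ∫ x, birkhoffAverage 𝕜 T g n x ∂μ = ∫ x, g x ∂μ := by
  simp only [birkhoffAverage, birkhoffSum]
  rw [integral_smul,
    integral_finsetSum (f := fun k x => g (T^[k] x)) _
      fun k _ => (hT.iterate k).integrable_comp_of_integrable hg]
  simp only [(hT.iterate _).integral_comp_of_aestronglyMeasurable hg.aestronglyMeasurable,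
    sum_const, card_range, nsmul_eq_mul, smul_eq_mul]
  field_simp

theorem integral_eq_of_ae_tendsto_birkhoffAverage [IsFiniteMeasure μ] {T : X → X}
    (hT : MeasurePreserving T μ μ) {g : X → 𝕜} (hg : AEStronglyMeasurable g μ) {C : ℝ}
    (hgC : ∀ x, ‖g x‖ ≤ C) {φ : ℕ → ℕ} (hφ : Tendsto φ atTop atTop) {p : X → 𝕜}
    (hp : ∀ᵐ x ∂μ, Tendsto (fun n => birkhoffAverage 𝕜 T g (φ n) x) atTop (𝓝 (p x))) :
    ∫ x, p x ∂μ = ∫ x, g x ∂μ := by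
  have hmeas (n : ℕ) : AEStronglyMeasurable (birkhoffAverage 𝕜 T g n) μ :=
    show AEStronglyMeasurable (fun x => (n : 𝕜)⁻¹ • ∑ k ∈ range n, g (T^[k] x)) μ from
    (Finset.aestronglyMeasurable_fun_sum (range n) fun k _ =>
      hg.comp_measurePreserving (hT.iterate k)).const_smul (n : 𝕜)⁻¹
  refine tendsto_nhds_unique (tendsto_integral_of_dominated_convergence (fun _ => C)
    (fun n => hmeas (φ n)) (integrable_const C)
    (fun n => ae_of_all _ (norm_birkhoffAverage_le T hgC (φ n))) hp) ?_
  refine tendsto_const_nhds.congr' ((hφ.eventually_ne_atTop 0).mono fun n hn => ?_)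
  exact (integral_birkhoffAverage hT (Integrable.of_bound hg C (ae_of_all _ hgC)) hn).symm

theorem integral_indicator_sub_const_mul_indicator [IsFiniteMeasure μ] {A C : Set X}
    (hA : MeasurableSet A) (hC : MeasurableSet C) (b : 𝕜) :
    ∫ x, (C.indicator 1 x - b) * A.indicator 1 x ∂μ = μ.real (A ∩ C) - b * μ.real A := by
  have hpt : ∀ x, (C.indicator 1 x - b) * A.indicator 1 x
      = (A ∩ C).indicator 1 x - b * A.indicator (1 : X → 𝕜) x := fun x => by
    by_cases hxA : x ∈ A <;> by_cases hxC : x ∈ C <;> simp [hxA, hxC]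
  simp only [hpt]
  rw [integral_sub (f := (A ∩ C).indicator 1) (g := fun x => b * A.indicator 1 x)
    ((integrable_const (1 : 𝕜)).indicator (hA.inter hC))
    (((integrable_const (1 : 𝕜)).indicator hA).const_mul b), integral_const_mul]
  simp [Pi.one_def, integral_indicator_const _ (hA.inter hC), integral_indicator_const _ hA,
    RCLike.real_smul_eq_coe_mul, mul_comm]

theorem norm_indicator_one_sub_measureReal_le [IsProbabilityMeasure μ] (s : Set X) (x : X) :
    ‖s.indicator (1 : X → 𝕜) x - μ.real s‖ ≤ 1 := by
  have h0 : 0 ≤ μ.real s := measureReal_nonneg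
  have h1 : μ.real s ≤ 1 := measureReal_le_one
  by_cases hx : x ∈ s
  · rw [Set.indicator_of_mem hx, Pi.one_apply, ← RCLike.ofReal_one, ← RCLike.ofReal_sub,
      RCLike.norm_ofReal, abs_le]
    constructor <;> linarith
  · rw [Set.indicator_of_notMem hx, zero_sub, norm_neg, RCLike.norm_ofReal, abs_of_nonneg h0]
    exact h1

theorem tendsto_cesaro_norm_integral_correlation [IsFiniteMeasure μ] {T : X → X}
    (hT : MeasurePreserving T μ μ) {f g : X → ℂ} (hf : Measurable f) (hg : Measurable g)
    {C D : ℝ} (hfC : ∀ z, ‖f z‖ ≤ C) (hgD : ∀ z, ‖g z‖ ≤ D)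
    (hWM : ∀ᵐ x ∂μ, WeaklyMixingSeq fun n => f (T^[n] x)) :
    Tendsto (fun H : ℕ => (1 / (H : ℝ)) *
      ∑ h ∈ Icc 1 H, ‖∫ z, f (T^[h] z) * starRingEnd ℂ (g z) ∂μ‖) atTop (𝓝 0) := by
  set c : ℕ → X → ℂ := fun h z => f (T^[h] z) * starRingEnd ℂ (g z)
  have hc (h : ℕ) : Measurable (c h) :=
    (hf.comp (hT.measurable.iterate h)).mul (Complex.continuous_conj.measurable.comp hg)
  have hcC (h : ℕ) (z : X) : ‖c h z‖ ≤ C * D := by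
    rw [norm_mul, Complex.norm_conj]
    exact mul_le_mul (hfC _) (hgD z) (norm_nonneg _) ((norm_nonneg _).trans (hfC z))
  -- `CorrLim` sums over `n ≥ 1`, hence the ergodic averages of `c h ∘ T` rather than of `c h`
  obtain ⟨φ, hφ, P, hPmeas, hP⟩ := exists_strictMono_ae_tendsto_birkhoffAverage (𝕜 := ℂ) hT
    fun h => MemLp.of_bound ((hc h).comp hT.measurable).aestronglyMeasurable (C * D)
      (ae_of_all _ fun z => hcC h (T z))
  have hmix : ∀ᵐ x ∂μ,
      Tendsto (fun H : ℕ => (1 / (H : ℝ)) * ∑ h ∈ Icc 1 H, ‖P h x‖) atTop (𝓝 0) := by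
    filter_upwards [hWM, ae_all_iff.2 hP] with x hx hPx
    refine hx.2 (fun n => g (T^[n] x)) ⟨D, fun n => hgD _⟩ φ hφ _
      fun h _ => (hPx h).congr fun q => ?_
    rw [birkhoffAverage, ← sum_Icc_one_iterate_eq_birkhoffSum, one_div, smul_eq_mul]
    refine congrArg _ (sum_congr rfl fun n _ => ?_)
    dsimp only
    rw [add_comm, Function.iterate_add_apply]
  have hPC (h : ℕ) : ∀ᵐ x ∂μ, ‖P h x‖ ≤ C * D := (hP h).mono fun x hx =>
    le_of_tendsto' hx.norm fun n => norm_birkhoffAverage_le T (fun z => hcC h (T z)) _ x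
  refine (tendsto_cesaro_norm_integral_of_ae hPmeas hPC hmix).congr fun N => ?_
  refine congrArg _ (sum_congr rfl fun h _ => ?_)
  rw [integral_eq_of_ae_tendsto_birkhoffAverage hT
      ((hc h).comp hT.measurable).aestronglyMeasurable (fun z => hcC h (T z))
      hφ.tendsto_atTop (hP h), Function.comp_def,
    hT.integral_comp_of_aestronglyMeasurable (g := c h) (hc h).aestronglyMeasurable]

end

theorem stmt12 {X : Type*} [MeasurableSpace X] (μ : MeasureTheory.Measure X)
    [MeasureTheory.IsProbabilityMeasure μ] (T : X → X)
    (hT : MeasureTheory.MeasurePreserving T μ μ)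
    (H : ∀ f : X → ℂ, Measurable f → (∃ C : ℝ, ∀ z, ‖f z‖ ≤ C) →
      (∫ z, f z ∂μ) = 0 →
      ∃ A : Set X, μ Aᶜ = 0 ∧
        ∀ x ∈ A, WeaklyMixingSeq (fun n : ℕ => f (T^[n] x))) :
    WeaklyMixingSys μ T := by
  intro A B hA hB
  set f : X → ℂ := fun z => B.indicator 1 z - μ.real B with hf_def
  have hf : Measurable f := (measurable_one.indicator hB).sub measurable_const
  have hf0 : ∫ z, f z ∂μ = 0 := by
    simpa using integral_indicator_sub_const_mul_indicator (μ := μ) MeasurableSet.univ hB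
      (μ.real B : ℂ)
  obtain ⟨A₀, hA₀, hWM⟩ := H f hf ⟨1, norm_indicator_one_sub_measureReal_le B⟩ hf0
  have hA1 (z : X) : ‖A.indicator (1 : X → ℂ) z‖ ≤ 1 :=
    (norm_indicator_le_norm_self 1 z).trans (by simp)
  have hWM' : ∀ᵐ x ∂μ, WeaklyMixingSeq fun n => f (T^[n] x) :=
    mem_of_superset (mem_ae_iff.2 hA₀) hWM
  refine (tendsto_cesaro_norm_integral_correlation hT hf (measurable_one.indicator hA)
    (norm_indicator_one_sub_measureReal_le B) hA1 hWM').congr fun N =>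
    congrArg _ (sum_congr rfl fun h _ => ?_)
  have hcorr : (fun z => f (T^[h] z) * starRingEnd ℂ (A.indicator 1 z)) = fun z =>
      ((T^[h] ⁻¹' B).indicator (1 : X → ℂ) z - μ.real B) * A.indicator 1 z := by
    funext z
    by_cases hz : z ∈ A <;> simp [hf_def, hz, Set.indicator_apply]
  rw [hcorr, integral_indicator_sub_const_mul_indicator hA ((hT.measurable.iterate h) hB)]
  change ‖(μ.real (A ∩ T^[h] ⁻¹' B) : ℂ) - (μ.real B : ℂ) * (μ.real A : ℂ)‖ = _
  rw [← Complex.ofReal_mul, ← Complex.ofReal_sub, Complex.norm_real, Real.norm_eq_abs, mul_comm]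
  rfl
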